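/- Let f : ℝ → ℝ be a 2π-periodic continuously differentiable function with 0 < m ≤ f(λ) ≤ M for all λ, and let f_n : ℝ → ℝ (n ∈ ℕ) be 2π-periodic continuously differentiable functions with C₁ ≤ f_n(λ) ≤ C₂ for all λ and n, where 0 < C₁ < C₂ < ∞. Suppose sup_{λ∈[−π,π]} |f_n(λ) − f(λ)| → 0 and sup_{λ∈[−π,π]} |f_n′(λ) − f′(λ)| → 0 as n → ∞. Then Σ_{k∈ℤ} k² |a_k(log f_n) − a_k(log f)|² → 0 and Σ_{k=1}^∞ |a_k(log f_n) − a_k(log f)| → 0 as n → ∞. -/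

import Mathlib

/-!
Put `u_n = log f_n - log f`. Its derivative `v_n = f_n'/f_n - f'/f` tends to `0` uniformly on
`[-π, π]`, and `u_n(-π) = u_n(π)` by periodicity, so integration by parts gives
`a_k(v_n) = i k a_k(u_n)`. Parseval then bounds `∑ k² |a_k(u_n)|² ≤ ∑ |a_k(v_n)|²` by
`sup |v_n|² → 0`, and Cauchy–Schwarz against `∑ 1/k² < ∞` gives
`∑_{k ≥ 1} |a_k(u_n)| ≤ (∑ 1/k²)^{1/2} (∑ k² |a_k(u_n)|²)^{1/2} → 0`.
-/

open MeasureTheory Filter Topology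

/-- The `k`-th Fourier coefficient of a (2π-periodic, integrable) function `g : ℝ → ℝ`:
`a_k(g) = (1/(2π)) ∫_{-π}^{π} g(λ) e^{-ikλ} dλ`. -/
noncomputable def fourierCoef (g : ℝ → ℝ) (k : ℤ) : ℂ :=
  (1 / (2 * Real.pi)) *
    ∫ x in (-Real.pi)..Real.pi, (g x : ℂ) * Complex.exp (-Complex.I * (k : ℂ) * (x : ℂ))

section

open Complex Real Set
open scoped Interval ENNReal

theorem ENNReal.inner_le_Lp_mul_Lq_tsum {ι : Type*} (f g : ι → ℝ≥0∞) {p q : ℝ}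
    (hpq : p.HolderConjugate q) :
    ∑' i, f i * g i ≤ (∑' i, f i ^ p) ^ (1 / p) * (∑' i, g i ^ q) ^ (1 / q) := by
  rw [ENNReal.tsum_eq_iSup_sum]
  refine iSup_le fun s => (ENNReal.inner_le_Lp_mul_Lq s f g hpq).trans ?_
  gcongr
  · exact one_div_nonneg.2 hpq.nonneg
  · exact ENNReal.sum_le_tsum s
  · exact one_div_nonneg.2 hpq.symm.nonneg
  · exact ENNReal.sum_le_tsum s

theorem tsum_ofReal_norm_succ_le {E : Type*} [SeminormedAddCommGroup E] (c : ℤ → E) :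
    ∑' k : ℕ, ENNReal.ofReal ‖c (k + 1)‖
      ≤ (∑' k : ℤ, ENNReal.ofReal ((k : ℝ) ^ 2 * ‖c k‖ ^ 2)) ^ (1 / 2 : ℝ)
        * (∑' k : ℕ, ENNReal.ofReal (1 / ((k : ℝ) + 1) ^ 2)) ^ (1 / 2 : ℝ) := by
  have hsplit (k : ℕ) : ENNReal.ofReal ‖c (k + 1)‖
      = ENNReal.ofReal ((k + 1) * ‖c (k + 1)‖) * ENNReal.ofReal (1 / (k + 1)) := by
    rw [← ENNReal.ofReal_mul (by positivity)]
    field_simp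
  have hsq {x : ℝ} (hx : 0 ≤ x) : ENNReal.ofReal x ^ (2 : ℝ) = ENNReal.ofReal (x ^ 2) := by
    rw [ENNReal.rpow_two, ENNReal.ofReal_pow hx]
  have hshift : ∑' k : ℕ, ENNReal.ofReal ((k + 1) * ‖c (k + 1)‖) ^ (2 : ℝ)
      ≤ ∑' k : ℤ, ENNReal.ofReal ((k : ℝ) ^ 2 * ‖c k‖ ^ 2) := by
    refine le_of_eq_of_le (tsum_congr fun k => ?_)
      (ENNReal.tsum_comp_le_tsum_of_injective (f := fun k : ℕ => (k : ℤ) + 1)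
        (fun a b hab => by simpa using hab) _)
    rw [hsq (by positivity)]
    push_cast
    ring_nf
  calc ∑' k : ℕ, ENNReal.ofReal ‖c (k + 1)‖
      = ∑' k : ℕ, ENNReal.ofReal ((k + 1) * ‖c (k + 1)‖) * ENNReal.ofReal (1 / (k + 1)) :=
        tsum_congr hsplit
    _ ≤ (∑' k : ℕ, ENNReal.ofReal ((k + 1) * ‖c (k + 1)‖) ^ (2 : ℝ)) ^ (1 / 2 : ℝ)
        * (∑' k : ℕ, ENNReal.ofReal (1 / ((k : ℝ) + 1)) ^ (2 : ℝ)) ^ (1 / 2 : ℝ) :=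
        ENNReal.inner_le_Lp_mul_Lq_tsum _ _ .two_two
    _ ≤ _ := by
        gcongr with k
        rw [hsq (by positivity), div_pow, one_pow]

theorem tendsto_tsum_ofReal_norm_succ {ι E : Type*} [SeminormedAddCommGroup E] {l : Filter ι}
    {c : ι → ℤ → E}
    (h : Tendsto (fun i => ∑' k : ℤ, ENNReal.ofReal ((k : ℝ) ^ 2 * ‖c i k‖ ^ 2)) l (𝓝 0)) :
    Tendsto (fun i => ∑' k : ℕ, ENNReal.ofReal ‖c i (k + 1)‖) l (𝓝 0) := by
  have hsum : Summable fun k : ℕ => 1 / ((k : ℝ) + 1) ^ 2 := by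
    simpa using (summable_nat_add_iff 1).2 (Real.summable_one_div_nat_pow.2 one_lt_two)
  have hC : ∑' k : ℕ, ENNReal.ofReal (1 / ((k : ℝ) + 1) ^ 2) ≠ ∞ := by
    rw [← ENNReal.ofReal_tsum_of_nonneg (fun _ => by positivity) hsum]
    exact ENNReal.ofReal_ne_top
  have hbound := ENNReal.Tendsto.mul_const
    (((ENNReal.continuous_rpow_const (y := 1 / 2)).tendsto 0).comp h)
    (Or.inr (ENNReal.rpow_ne_top_of_nonneg (by norm_num : (0 : ℝ) ≤ 1 / 2) hC))
  rw [Function.comp_def, ENNReal.zero_rpow_of_pos (by norm_num), zero_mul] at hbound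
  exact tendsto_of_tendsto_of_tendsto_of_le_of_le tendsto_const_nhds hbound
    (fun _ => zero_le) fun i => tsum_ofReal_norm_succ_le (c i)

theorem TendstoUniformlyOn.ofReal_sub {ι α : Type*} {l : Filter ι} {s : Set α}
    {F : ι → α → ℝ} {f : α → ℝ} (h : TendstoUniformlyOn F f l s) :
    TendstoUniformlyOn (fun i x => ((F i x - f x : ℝ) : ℂ)) 0 l s := by
  rw [Metric.tendstoUniformlyOn_iff] at h ⊢
  intro ε hε
  filter_upwards [h ε hε] with i hi x hx
  rw [Pi.zero_apply, dist_zero_left, Complex.norm_real, Real.norm_eq_abs, abs_sub_comm]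
  exact hi x hx

theorem fourierCoef_eq_fourierCoeffOn (g : ℝ → ℝ) (k : ℤ) :
    fourierCoef g k = fourierCoeffOn (neg_lt_self pi_pos) (fun x => (g x : ℂ)) k := by
  have hπ : (π : ℂ) ≠ 0 := ofReal_ne_zero.mpr pi_ne_zero
  rw [fourierCoeffOn_eq_integral, fourierCoef, real_smul]
  congr 1
  · push_cast; ring
  · refine intervalIntegral.integral_congr fun x _ => ?_
    rw [smul_eq_mul, fourier_coe_apply, mul_comm]
    congr 2
    push_cast
    field_simp
    ring

theorem fourierCoef_sub {g h : ℝ → ℝ} (hg : IntervalIntegrable g volume (-π) π)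
    (hh : IntervalIntegrable h volume (-π) π) (k : ℤ) :
    fourierCoef g k - fourierCoef h k = fourierCoef (g - h) k := by
  have hint {q : ℝ → ℝ} (hq : IntervalIntegrable q volume (-π) π) :
      IntervalIntegrable (fun x : ℝ => (q x : ℂ) * exp (-I * k * x)) volume (-π) π :=
    IntervalIntegrable.mul_continuousOn ⟨Integrable.ofReal hq.1, Integrable.ofReal hq.2⟩
      (by fun_prop)
  rw [fourierCoef, fourierCoef, fourierCoef, ← mul_sub,
    ← intervalIntegral.integral_sub (hint hg) (hint hh)]
  simp only [Pi.sub_apply, ofReal_sub, sub_mul]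

theorem fourierCoeffOn_of_hasDerivAt_of_eq {a b : ℝ} (hab : a < b) {f f' : ℝ → ℂ} {n : ℤ}
    (hn : n ≠ 0) (hf : ∀ x ∈ [[a, b]], HasDerivAt f (f' x) x)
    (hf' : IntervalIntegrable f' volume a b) (hfab : f a = f b) :
    fourierCoeffOn hab f' n = 2 * π * I * n / (b - a) * fourierCoeffOn hab f n := by
  have hba : ((b - a : ℝ) : ℂ) ≠ 0 := ofReal_ne_zero.mpr (sub_pos.mpr hab).ne'
  have hπ : (π : ℂ) ≠ 0 := ofReal_ne_zero.mpr pi_ne_zero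
  have hn' : (n : ℂ) ≠ 0 := Int.cast_ne_zero.mpr hn
  rw [fourierCoeffOn_of_hasDerivAt hab hn hf hf', hfab, sub_self, mul_zero, zero_sub]
  push_cast at hba ⊢
  field_simp

theorem sq_mul_sq_norm_fourierCoeffOn_le {u u' : ℝ → ℂ}
    (hu : ∀ x ∈ [[-π, π]], HasDerivAt u (u' x) x) (hu' : IntervalIntegrable u' volume (-π) π)
    (hper : u (-π) = u π) (k : ℤ) :
    (k : ℝ) ^ 2 * ‖fourierCoeffOn (neg_lt_self pi_pos) u k‖ ^ 2
      ≤ ‖fourierCoeffOn (neg_lt_self pi_pos) u' k‖ ^ 2 := by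
  rcases eq_or_ne k 0 with rfl | hk
  · simp
  rw [fourierCoeffOn_of_hasDerivAt_of_eq _ hk hu hu' hper, norm_mul, mul_pow,
    show (2 * π * I * k / ((π : ℝ) - (-π : ℝ)) : ℂ) = I * k by push_cast; field_simp; ring]
  simp

theorem tsum_ofReal_sq_norm_fourierCoeffOn_le {a b B : ℝ} (hab : a < b) {u : ℝ → ℂ}
    (hu : ContinuousOn u (Icc a b)) (hB : ∀ x ∈ Icc a b, ‖u x‖ ≤ B) :
    ∑' k : ℤ, ENNReal.ofReal (‖fourierCoeffOn hab u k‖ ^ 2) ≤ ENNReal.ofReal (B ^ 2) := by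
  have hL2 : MemLp u 2 (volume.restrict (Ioc a b)) :=
    MemLp.of_bound ((hu.mono Ioc_subset_Icc_self).aestronglyMeasurable measurableSet_Ioc) B
      ((ae_restrict_iff' measurableSet_Ioc).2
        (.of_forall fun x hx => hB x (Ioc_subset_Icc_self hx)))
  rw [← ENNReal.ofReal_tsum_of_nonneg (fun _ => by positivity)
    (hasSum_sq_fourierCoeffOn hab hL2).summable, tsum_sq_fourierCoeffOn hab hL2]
  refine ENNReal.ofReal_le_ofReal ?_
  have hint : ‖∫ x in a..b, ‖u x‖ ^ 2‖ ≤ B ^ 2 * |b - a| :=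
    intervalIntegral.norm_integral_le_of_norm_le_const fun x hx => by
      rw [uIoc_of_le hab.le] at hx
      rw [norm_pow, norm_norm]
      exact pow_le_pow_left₀ (norm_nonneg _) (hB x (Ioc_subset_Icc_self hx)) 2
  rw [abs_of_pos (sub_pos.2 hab)] at hint
  rw [smul_eq_mul, inv_mul_le_iff₀ (sub_pos.2 hab), mul_comm]
  exact (Real.le_norm_self _).trans hint

theorem tendsto_tsum_ofReal_sq_norm_fourierCoeffOn {ι : Type*} {l : Filter ι} {a b : ℝ}
    (hab : a < b) {v : ι → ℝ → ℂ} (hv : ∀ i, ContinuousOn (v i) (Icc a b))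
    (hlim : TendstoUniformlyOn v 0 l (Icc a b)) :
    Tendsto (fun i => ∑' k : ℤ, ENNReal.ofReal (‖fourierCoeffOn hab (v i) k‖ ^ 2)) l (𝓝 0) := by
  rw [ENNReal.tendsto_nhds_zero]
  intro ε hε
  have hsq : Tendsto (fun r : ℝ => ENNReal.ofReal (r ^ 2)) (𝓝[>] 0) (𝓝 0) := by
    simpa using (ENNReal.tendsto_ofReal ((continuous_pow 2).tendsto 0)).mono_left
      nhdsWithin_le_nhds
  obtain ⟨r, hr, hrpos⟩ := ((hsq.eventually (ge_mem_nhds hε)).and self_mem_nhdsWithin).exists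
  filter_upwards [Metric.tendstoUniformlyOn_iff.1 hlim r hrpos] with i hi
  exact (tsum_ofReal_sq_norm_fourierCoeffOn_le hab (hv i) fun x hx => by
    simpa using (hi x hx).le).trans hr

theorem tendsto_tsum_sq_mul_sq_norm_fourierCoeffOn {ι : Type*} {l : Filter ι}
    {u u' : ι → ℝ → ℂ} (hu : ∀ i, ∀ x ∈ Icc (-π) π, HasDerivAt (u i) (u' i x) x)
    (hu' : ∀ i, ContinuousOn (u' i) (Icc (-π) π)) (hper : ∀ i, u i (-π) = u i π)
    (hlim : TendstoUniformlyOn u' 0 l (Icc (-π) π)) :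
    Tendsto (fun i => ∑' k : ℤ,
      ENNReal.ofReal ((k : ℝ) ^ 2 * ‖fourierCoeffOn (neg_lt_self pi_pos) (u i) k‖ ^ 2))
      l (𝓝 0) := by
  have hπ : uIcc (-π) π = Icc (-π) π := uIcc_of_le (neg_le_self pi_pos.le)
  refine tendsto_of_tendsto_of_tendsto_of_le_of_le tendsto_const_nhds
    (tendsto_tsum_ofReal_sq_norm_fourierCoeffOn (neg_lt_self pi_pos) hu' hlim)
    (fun _ => zero_le) fun i => ENNReal.tsum_le_tsum fun k => ENNReal.ofReal_le_ofReal ?_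
  rw [← hπ] at hu hu'
  exact sq_mul_sq_norm_fourierCoeffOn_le (hu i) (hu' i).intervalIntegrable (hper i) k

end

theorem statement8_general (f : ℝ → ℝ) (fn : ℕ → ℝ → ℝ) (m M C₁ C₂ : ℝ)
    (hm : 0 < m) (hbound : ∀ x, m ≤ f x ∧ f x ≤ M)
    (hC₁ : 0 < C₁)
    (hnbound : ∀ n x, C₁ ≤ fn n x ∧ fn n x ≤ C₂)
    (hf_per : Function.Periodic f (2 * Real.pi))
    (hfn_per : ∀ n, Function.Periodic (fn n) (2 * Real.pi))
    (hf_smooth : ContDiff ℝ 1 f) (hfn_smooth : ∀ n, ContDiff ℝ 1 (fn n))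
    (hunif : TendstoUniformlyOn fn f atTop (Set.Icc (-Real.pi) Real.pi))
    (hunif' : TendstoUniformlyOn (fun n => deriv (fn n)) (deriv f) atTop
      (Set.Icc (-Real.pi) Real.pi)) :
    Tendsto
      (fun n => ∑' k : ℤ,
        ENNReal.ofReal ((k : ℝ) ^ 2 *
          ‖fourierCoef (fun x => Real.log (fn n x)) k
            - fourierCoef (fun x => Real.log (f x)) k‖ ^ 2))
      atTop (𝓝 0) ∧
    Tendsto
      (fun n => ∑' k : ℕ,
        ENNReal.ofReal
          ‖fourierCoef (fun x => Real.log (fn n x)) (k + 1)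
            - fourierCoef (fun x => Real.log (f x)) (k + 1)‖)
      atTop (𝓝 0) := by
  have hπ : -Real.pi + 2 * Real.pi = Real.pi := by ring
  have hf0 (x : ℝ) : f x ≠ 0 := (hm.trans_le (hbound x).1).ne'
  have hfn0 (n : ℕ) (x : ℝ) : fn n x ≠ 0 := (hC₁.trans_le (hnbound n x).1).ne'
  have hcoef (n : ℕ) (k : ℤ) : fourierCoef (fun x => Real.log (fn n x)) k
      - fourierCoef (fun x => Real.log (f x)) k = fourierCoeffOn (neg_lt_self Real.pi_pos)
        (fun x => ((Real.log (fn n x) - Real.log (f x) : ℝ) : ℂ)) k := by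
    rw [fourierCoef_sub (((hfn_smooth n).continuous.log (hfn0 n)).intervalIntegrable _ _)
      ((hf_smooth.continuous.log hf0).intervalIntegrable _ _), fourierCoef_eq_fourierCoeffOn]
    rfl
  have hderiv (n : ℕ) (x : ℝ) : HasDerivAt (fun x => ((Real.log (fn n x) - Real.log (f x) : ℝ) : ℂ))
      ((deriv (fn n) x / fn n x - deriv f x / f x : ℝ) : ℂ) x :=
    ((((hfn_smooth n).differentiable one_ne_zero x).hasDerivAt.log (hfn0 n x)).sub
      ((hf_smooth.differentiable one_ne_zero x).hasDerivAt.log (hf0 x))).ofReal_comp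
  have hcont (n : ℕ) : Continuous fun x => ((deriv (fn n) x / fn n x - deriv f x / f x : ℝ) : ℂ) :=
    Complex.continuous_ofReal.comp ((((hfn_smooth n).continuous_deriv le_rfl).div
      (hfn_smooth n).continuous (hfn0 n)).sub
        ((hf_smooth.continuous_deriv le_rfl).div hf_smooth.continuous hf0))
  have hquot : TendstoUniformlyOn (fun n x => deriv (fn n) x / fn n x) (fun x => deriv f x / f x)
      atTop (Set.Icc (-Real.pi) Real.pi) := by
    rw [← tendstoLocallyUniformlyOn_iff_tendstoUniformlyOn_of_compact isCompact_Icc]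
      at hunif hunif' ⊢
    exact hunif'.fun_div₀ hunif (hf_smooth.continuous_deriv le_rfl).continuousOn
      hf_smooth.continuous.continuousOn fun x _ => hf0 x
  have hweighted := tendsto_tsum_sq_mul_sq_norm_fourierCoeffOn (fun n x _ => hderiv n x)
    (fun n => (hcont n).continuousOn)
    (fun n => by simp only [← hfn_per n (-Real.pi), ← hf_per (-Real.pi), hπ]) hquot.ofReal_sub
  simp only [hcoef]
  exact ⟨hweighted, tendsto_tsum_ofReal_norm_succ hweighted⟩

/-- If `f` is 2π-periodic, `C¹` with `0 < m ≤ f ≤ M`, the `f_n` are 2π-periodic, `C¹` with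
`0 < C₁ ≤ f_n ≤ C₂`, and both `f_n → f` and `f_n' → f'` uniformly on `[-π, π]`, then
`∑_{k ∈ ℤ} k² |a_k(log f_n) - a_k(log f)|² → 0` and
`∑_{k=1}^∞ |a_k(log f_n) - a_k(log f)| → 0`. -/
theorem statement8 (f : ℝ → ℝ) (fn : ℕ → ℝ → ℝ) (m M C₁ C₂ : ℝ)
    (hm : 0 < m) (hbound : ∀ x, m ≤ f x ∧ f x ≤ M)
    (hC₁ : 0 < C₁) (hC₁₂ : C₁ < C₂)
    (hnbound : ∀ n x, C₁ ≤ fn n x ∧ fn n x ≤ C₂)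
    (hf_per : Function.Periodic f (2 * Real.pi))
    (hfn_per : ∀ n, Function.Periodic (fn n) (2 * Real.pi))
    (hf_smooth : ContDiff ℝ 1 f) (hfn_smooth : ∀ n, ContDiff ℝ 1 (fn n))
    (hunif : TendstoUniformlyOn fn f atTop (Set.Icc (-Real.pi) Real.pi))
    (hunif' : TendstoUniformlyOn (fun n => deriv (fn n)) (deriv f) atTop
      (Set.Icc (-Real.pi) Real.pi)) :
    Tendsto
      (fun n => ∑' k : ℤ,
        ENNReal.ofReal ((k : ℝ) ^ 2 *
          ‖fourierCoef (fun x => Real.log (fn n x)) k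
            - fourierCoef (fun x => Real.log (f x)) k‖ ^ 2))
      atTop (𝓝 0) ∧
    Tendsto
      (fun n => ∑' k : ℕ,
        ENNReal.ofReal
          ‖fourierCoef (fun x => Real.log (fn n x)) (k + 1)
            - fourierCoef (fun x => Real.log (f x)) (k + 1)‖)
      atTop (𝓝 0) :=
  statement8_general f fn m M C₁ C₂ hm hbound hC₁ hnbound hf_per hfn_per hf_smooth hfn_smooth hunif
    hunif'
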